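/- arXiv:2511.20114 — 2 statements merged into one kernel-verified Lean document; each statement's English description precedes it below -/
import Mathlib

section
/- Let ε ∈ ℂ be a primitive 5th root of unity and let G_icosa be the binary icosahedral group, i.e., the subgroup of GL(2,ℂ) generated by the matrices S = [[ε³, 0], [0, ε²]], T = (1/(ε² − ε³))·[[ε + ε⁴, 1], [1, −(ε + ε⁴)]], and U = [[0, 1], [−1, 0]]. Let V_d denote the homogeneous degree-d component of ℂ[x₁,x₂], with GL(2,ℂ) acting by linear substitution of variables. For each k ∈ {2, 3, 4, 5}, every ℂ-linear map φ : V_{2k−1} → V₁ that is G_icosa-equivariant (i.e., φ(g·f) = g·φ(f) for all g ∈ G_icosa and f ∈ V_{2k−1}) is the zero map. -/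
open Matrix MvPolynomial

noncomputable section

/-- The substitution action `f ↦ f(Ax)` of a matrix on polynomials in two variables. -/
def substMap (A : Matrix (Fin 2) (Fin 2) ℂ) :
    MvPolynomial (Fin 2) ℂ →ₗ[ℂ] MvPolynomial (Fin 2) ℂ :=
  (MvPolynomial.aeval fun i => ∑ j, A i j • (X j : MvPolynomial (Fin 2) ℂ)).toLinearMap

/-- `Vd d` is the homogeneous degree-`d` component of `ℂ[x₁,x₂]`. -/
def Vd (d : ℕ) : Submodule ℂ (MvPolynomial (Fin 2) ℂ) :=
  homogeneousSubmodule (Fin 2) ℂ d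

lemma substMap_mem (A : Matrix (Fin 2) (Fin 2) ℂ) {d : ℕ} {f : MvPolynomial (Fin 2) ℂ}
    (hf : f ∈ Vd d) : substMap A f ∈ Vd d := by
  have hg : ∀ i, (∑ j, A i j • (X j : MvPolynomial (Fin 2) ℂ)).IsHomogeneous 1 := by
    intro i
    apply IsHomogeneous.sum
    intro j _
    rw [smul_eq_C_mul]
    exact isHomogeneous_C_mul_X _ _
  have h := ((mem_homogeneousSubmodule _ _).1 hf).aeval _ hg
  rw [one_mul] at h
  exact (mem_homogeneousSubmodule _ _).2 h

/-- The action of a matrix on the degree-`d` homogeneous component, by `f ↦ f(Ax)`. -/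
def actV (A : Matrix (Fin 2) (Fin 2) ℂ) (d : ℕ) : Vd d →ₗ[ℂ] Vd d :=
  LinearMap.codRestrict (Vd d) ((substMap A).comp (Vd d).subtype)
    fun f => substMap_mem A f.2

/-!
Write `φ f = λ₀(f) X₀ + λ₁(f) X₁`. Equivariance under the diagonal matrix `S` says that `λⱼ`
vanishes on every monomial `X₀ᵃ X₁ᵇ` whose `S`-eigenvalue `ε^(3a+2b)` differs from that of `Xⱼ`;
in degree `d ≤ 9` this leaves at most two monomials per coordinate. Equivariance under `T`,
applied to `X₀ᵈ` (and to `X₁ᵈ` when `d = 9`), is then a linear system for the surviving values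
with coefficients in `ℚ(τ)`, `τ = ε + ε⁴`, `τ² + τ - 1 = 0`, and this system only has the
trivial solution.
-/

namespace MvPolynomial

variable {σ R : Type*}

lemma IsHomogeneous.eq_zero_of_coeff_single_one [CommSemiring R] {p : MvPolynomial σ R}
    (hp : p.IsHomogeneous 1) (h : ∀ i, coeff (Finsupp.single i 1) p = 0) : p = 0 := by
  ext m
  by_contra hm
  have hdeg : m ∈ Set.range fun i : σ => Finsupp.single i 1 := by
    rw [Finsupp.range_single_one, Set.mem_ofPred_eq, Finsupp.degree_eq_weight_one]
    exact hp hm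
  obtain ⟨i, rfl⟩ := hdeg
  exact hm (h i)

lemma IsHomogeneous.eq_sum_C_mul_X [CommRing R] [Fintype σ] [DecidableEq σ]
    {p : MvPolynomial σ R} (hp : p.IsHomogeneous 1) :
    p = ∑ i, C (coeff (Finsupp.single i 1) p) * X i := by
  rw [← sub_eq_zero]
  have hsum : (∑ i, C (coeff (Finsupp.single i 1) p) * X i).IsHomogeneous 1 :=
    IsHomogeneous.sum _ _ _ fun i _ => isHomogeneous_C_mul_X _ i
  refine (hp.sub hsum).eq_zero_of_coeff_single_one fun j => ?_
  simp [coeff_sum, coeff_X, Finsupp.single_left_inj]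

end MvPolynomial

lemma substMap_X_pow (A : Matrix (Fin 2) (Fin 2) ℂ) (i : Fin 2) (d : ℕ) :
    substMap A (X i ^ d) = (C (A i 0) * X 0 + C (A i 1) * X 1) ^ d := by
  simp [substMap, Fin.sum_univ_two, smul_eq_C_mul]

lemma substMap_diagonal_X_pow_mul_X_pow (x y : ℂ) (a b : ℕ) :
    substMap !![x, 0; 0, y] (X 0 ^ a * X 1 ^ b) = C (x ^ a * y ^ b) * (X 0 ^ a * X 1 ^ b) := by
  simp [substMap, Fin.sum_univ_two, smul_eq_C_mul]
  ring

lemma coeff_substMap_of_isHomogeneous_one (A : Matrix (Fin 2) (Fin 2) ℂ)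
    {v : MvPolynomial (Fin 2) ℂ} (hv : v.IsHomogeneous 1) (j : Fin 2) :
    coeff (Finsupp.single j 1) (substMap A v) = ∑ i, coeff (Finsupp.single i 1) v * A i j := by
  conv_lhs => rw [hv.eq_sum_C_mul_X]
  fin_cases j <;> simp [substMap, coeff_X, Finsupp.single_left_inj, smul_eq_C_mul]

lemma X_pow_mul_X_pow_mem_Vd (a b : ℕ) :
    (X 0 ^ a * X 1 ^ b : MvPolynomial (Fin 2) ℂ) ∈ Vd (a + b) :=
  (isHomogeneous_X_pow 0 a).mul (isHomogeneous_X_pow 1 b)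

lemma LinearMap.map_linearForm_pow {M : Type*} [AddCommMonoid M] [Module ℂ M]
    (L : MvPolynomial (Fin 2) ℂ →ₗ[ℂ] M) (p q : ℂ) (d : ℕ) :
    L ((C p * X 0 + C q * X 1) ^ d) =
      ∑ a ∈ Finset.range (d + 1),
        (p ^ a * q ^ (d - a) * d.choose a) • L (X 0 ^ a * X 1 ^ (d - a)) := by
  rw [add_pow, map_sum]
  refine Finset.sum_congr rfl fun a _ => ?_
  rw [← map_smul]
  congr 1
  simp only [mul_pow, ← C_pow, smul_eq_C_mul, map_mul, map_natCast]
  ring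

section Coordinates

variable {d : ℕ} (φ : Vd d →ₗ[ℂ] Vd 1)

/-- The `X j`-coordinate of `φ`. It is defined on all polynomials, through the projection onto
`Vd d`, so that binomial expansions can be pushed through `φ` without membership proofs. -/
def extCoeff (j : Fin 2) : MvPolynomial (Fin 2) ℂ →ₗ[ℂ] ℂ :=
  lcoeff ℂ (Finsupp.single j 1) ∘ₗ (Vd 1).subtype ∘ₗ φ ∘ₗ
    (homogeneousComponent d).codRestrict (Vd d) (homogeneousComponent_mem d)

variable {φ}

lemma extCoeff_of_mem {p : MvPolynomial (Fin 2) ℂ} (hp : p ∈ Vd d) (j : Fin 2) :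
    extCoeff φ j p = coeff (Finsupp.single j 1) (φ ⟨p, hp⟩ : MvPolynomial (Fin 2) ℂ) := by
  have : (homogeneousComponent d).codRestrict (Vd d) (homogeneousComponent_mem d) p = ⟨p, hp⟩ :=
    Subtype.ext (by simp [LinearMap.codRestrict, homogeneousComponent_of_mem hp])
  simp [extCoeff, this]

lemma extCoeff_substMap {A : Matrix (Fin 2) (Fin 2) ℂ}
    (hA : ∀ f, φ (actV A d f) = actV A 1 (φ f)) {p : MvPolynomial (Fin 2) ℂ} (hp : p ∈ Vd d)
    (j : Fin 2) : extCoeff φ j (substMap A p) = ∑ i, extCoeff φ i p * A i j := by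
  simp only [extCoeff_of_mem (substMap_mem A hp), extCoeff_of_mem hp,
    ← coeff_substMap_of_isHomogeneous_one A (φ ⟨p, hp⟩).2 j]
  exact congrArg (fun v : Vd 1 => coeff (Finsupp.single j 1) (v : MvPolynomial (Fin 2) ℂ))
    (hA ⟨p, hp⟩)

lemma eq_zero_of_extCoeff_X_pow_mul_X_pow
    (h : ∀ j a b, a + b = d → extCoeff φ j (X 0 ^ a * X 1 ^ b) = 0) : φ = 0 := by
  have hzero : ∀ j, extCoeff φ j = 0 := fun j => (basisMonomials (Fin 2) ℂ).ext fun s => by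
    have hs : monomial s (1 : ℂ) = X 0 ^ s 0 * X 1 ^ s 1 := by
      rw [monomial_eq, C_1, one_mul, Finsupp.prod_fintype _ _ fun i => pow_zero _,
        Fin.prod_univ_two]
    change extCoeff φ j (monomial s 1) = 0
    rw [hs]
    by_cases hd : s 0 + s 1 = d
    · exact h j _ _ hd
    · have : homogeneousComponent d (X 0 ^ s 0 * X 1 ^ s 1 : MvPolynomial (Fin 2) ℂ) = 0 := by
        simp [homogeneousComponent_of_mem (X_pow_mul_X_pow_mem_Vd (s 0) (s 1)), Ne.symm hd]
      have hproj : (homogeneousComponent d).codRestrict (Vd d) (homogeneousComponent_mem d)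
          (X 0 ^ s 0 * X 1 ^ s 1) = 0 := Subtype.ext this
      simp [extCoeff, hproj]
  ext1 f
  refine Subtype.ext ((φ f).2.eq_zero_of_coeff_single_one fun j => ?_)
  rw [← extCoeff_of_mem f.2, hzero, LinearMap.zero_apply]

lemma extCoeff_diagonal {x y : ℂ}
    (hA : ∀ f, φ (actV !![x, 0; 0, y] d f) = actV !![x, 0; 0, y] 1 (φ f))
    {a b : ℕ} (hab : a + b = d) (j : Fin 2) :
    x ^ a * y ^ b * extCoeff φ j (X 0 ^ a * X 1 ^ b) =
      extCoeff φ j (X 0 ^ a * X 1 ^ b) * !![x, 0; 0, y] j j := by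
  have hmem := hab ▸ X_pow_mul_X_pow_mem_Vd a b
  have := extCoeff_substMap hA hmem j
  rw [substMap_diagonal_X_pow_mul_X_pow, ← smul_eq_C_mul, map_smul, smul_eq_mul] at this
  rw [this]
  fin_cases j <;> simp

end Coordinates

section Icosahedral

variable {d : ℕ} {φ : Vd d →ₗ[ℂ] Vd 1} {ε c τ : ℂ}

lemma extCoeff_eq_zero_of_weight (hε : IsPrimitiveRoot ε 5)
    (hS : ∀ f, φ (actV !![ε ^ 3, 0; 0, ε ^ 2] d f) = actV !![ε ^ 3, 0; 0, ε ^ 2] 1 (φ f))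
    {a b : ℕ} (hab : a + b = d) (j : Fin 2) (hw : (3 * a + 2 * b) % 5 ≠ 3 - j) :
    extCoeff φ j (X 0 ^ a * X 1 ^ b) = 0 := by
  have h := extCoeff_diagonal hS hab j
  have hjj : !![ε ^ 3, 0; 0, ε ^ 2] j j = ε ^ (3 - (j : ℕ)) := by fin_cases j <;> rfl
  rw [hjj, ← pow_mul, ← pow_mul, ← pow_add, mul_comm (ε ^ _)] at h
  by_contra hne
  have hpow := mul_left_cancel₀ hne h
  rw [pow_eq_pow_mod _ hε.pow_eq_one] at hpow
  exact hw (hε.pow_inj (Nat.mod_lt _ (by norm_num)) (by omega) hpow)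

lemma sum_extCoeff_eq_sum_filter_weight (hε : IsPrimitiveRoot ε 5)
    (hS : ∀ f, φ (actV !![ε ^ 3, 0; 0, ε ^ 2] d f) = actV !![ε ^ 3, 0; 0, ε ^ 2] 1 (φ f))
    (g : ℕ → ℂ) (j : Fin 2) :
    ∑ a ∈ Finset.range (d + 1), g a • extCoeff φ j (X 0 ^ a * X 1 ^ (d - a)) =
      ∑ a ∈ Finset.range (d + 1) with (3 * a + 2 * (d - a)) % 5 = 3 - j,
        g a • extCoeff φ j (X 0 ^ a * X 1 ^ (d - a)) := by
  refine (Finset.sum_filter_of_ne fun a ha hne => ?_).symm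
  by_contra hw
  rw [extCoeff_eq_zero_of_weight hε hS (by simp at ha; omega) j hw, smul_zero] at hne
  exact hne rfl

lemma eq_zero_of_degree_eq_three_five_seven (hε : IsPrimitiveRoot ε 5) (hc : c ≠ 0) (hτ : τ ≠ 0)
    (hd : d = 3 ∨ d = 5 ∨ d = 7)
    (hS : ∀ f, φ (actV !![ε ^ 3, 0; 0, ε ^ 2] d f) = actV !![ε ^ 3, 0; 0, ε ^ 2] 1 (φ f))
    (hT : ∀ f, φ (actV (c • !![τ, 1; 1, -τ]) d f) = actV (c • !![τ, 1; 1, -τ]) 1 (φ f)) :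
    φ = 0 := by
  have hweight := fun {a b} => extCoeff_eq_zero_of_weight (a := a) (b := b) hε hS
  refine eq_zero_of_extCoeff_X_pow_mul_X_pow fun j a b hab => ?_
  by_cases hw : (3 * a + 2 * b) % 5 ≠ 3 - j
  · exact hweight hab j hw
  obtain rfl : b = d - a := by omega
  have hX0 : ∀ i, extCoeff φ i (X 0 ^ d) = 0 := fun i => by
    simpa using hweight (add_zero d) i (by omega)
  have key := extCoeff_substMap hT (isHomogeneous_X_pow 0 d) j
  rw [substMap_X_pow, LinearMap.map_linearForm_pow, Finset.sum_eq_single a] at key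
  · simp only [hX0, zero_mul, Finset.sum_const_zero, smul_eq_mul, Matrix.smul_apply,
      Matrix.of_apply, Matrix.cons_val', Matrix.cons_val_zero, Matrix.cons_val_one,
      Matrix.empty_val', Matrix.cons_val_fin_one] at key
    have hchoose : (d.choose a : ℂ) ≠ 0 := Nat.cast_ne_zero.2 (Nat.choose_pos (by omega)).ne'
    simpa [hc, hτ, hchoose] using key
  · intro a' ha' hne
    rw [Finset.mem_range] at ha'
    rw [hweight (by omega) j (by omega), smul_zero]
  · intro ha
    simp at ha
    omega

lemma add_mul_ne_zero_of_sq_add_sub_one (hτ : τ ^ 2 + τ - 1 = 0) {a b : ℂ}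
    (h : a ^ 2 - a * b - b ^ 2 ≠ 0) : a + b * τ ≠ 0 := fun h0 =>
  h (by linear_combination (a - b - b * τ) * h0 + b ^ 2 * hτ)

lemma eq_zero_of_degree_nine_relations (hτ : τ ^ 2 + τ - 1 = 0) {c α₀ α₅ β₄ β₉ : ℂ}
    (hc : 25 * τ ^ 4 * c ^ 8 = 1)
    (h₁ : c ^ 9 * (α₀ + 126 * τ ^ 5 * α₅) = c * β₉)
    (h₂ : c ^ 9 * (126 * τ ^ 4 * β₄ + τ ^ 9 * β₉) = -c * τ * β₉)
    (h₃ : c ^ 9 * (-τ ^ 9 * α₀ + 126 * τ ^ 4 * α₅) = c * τ * α₀)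
    (h₄ : c ^ 9 * (-126 * τ ^ 5 * β₄ + β₉) = c * α₀) :
    α₀ = 0 ∧ α₅ = 0 ∧ β₄ = 0 ∧ β₉ = 0 := by
  have hc0 : c ≠ 0 := by rintro rfl; norm_num at hc
  have hτ0 : τ ≠ 0 := by rintro rfl; norm_num at hτ
  have e₁ : α₀ + 126 * τ ^ 5 * α₅ = 25 * τ ^ 4 * β₉ := mul_left_cancel₀ hc0 <| by
    linear_combination 25 * τ ^ 4 * h₁ - c * (α₀ + 126 * τ ^ 5 * α₅) * hc
  have e₂ : 126 * τ ^ 4 * β₄ + τ ^ 9 * β₉ = -25 * τ ^ 5 * β₉ := mul_left_cancel₀ hc0 <| by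
    linear_combination 25 * τ ^ 4 * h₂ - c * (126 * τ ^ 4 * β₄ + τ ^ 9 * β₉) * hc
  have e₃ : -τ ^ 9 * α₀ + 126 * τ ^ 4 * α₅ = 25 * τ ^ 5 * α₀ := mul_left_cancel₀ hc0 <| by
    linear_combination 25 * τ ^ 4 * h₃ - c * (-τ ^ 9 * α₀ + 126 * τ ^ 4 * α₅) * hc
  have e₄ : -126 * τ ^ 5 * β₄ + β₉ = 25 * τ ^ 4 * α₀ := mul_left_cancel₀ hc0 <| by
    linear_combination 25 * τ ^ 4 * h₄ - c * (-126 * τ ^ 5 * β₄ + β₉) * hc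
  -- Eliminating `α₅` and `β₄` leaves `ν α₀ = 25 τ⁴ β₉` and `ν β₉ = 25 τ⁴ α₀` with
  -- `ν = 1 + τ¹⁰ + 25 τ⁶`; the multiples of `hτ` below reduce `ν ∓ 25 τ⁴` modulo `τ² + τ - 1`.
  have hsum : (110 + -180 * τ) * (α₀ + β₉) = 0 := by
    linear_combination e₁ - τ * e₃ + τ * e₂ + e₄ - (α₀ + β₉) * (τ ^ 8 - τ ^ 7
      + 2 * τ ^ 6 - 3 * τ ^ 5 + 30 * τ ^ 4 - 33 * τ ^ 3 + 38 * τ ^ 2 - 71 * τ + 109) * hτ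
  have hdiff : (210 + -330 * τ) * (α₀ - β₉) = 0 := by
    linear_combination e₁ - τ * e₃ - τ * e₂ - e₄ - (α₀ - β₉) * (τ ^ 8 - τ ^ 7
      + 2 * τ ^ 6 - 3 * τ ^ 5 + 30 * τ ^ 4 - 33 * τ ^ 3 + 88 * τ ^ 2 - 121 * τ + 209) * hτ
  have hsum' := (mul_eq_zero.1 hsum).resolve_left
    (add_mul_ne_zero_of_sq_add_sub_one hτ (by norm_num))
  have hdiff' := (mul_eq_zero.1 hdiff).resolve_left
    (add_mul_ne_zero_of_sq_add_sub_one hτ (by norm_num))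
  have hα₀ : α₀ = 0 := by linear_combination (hsum' + hdiff') / 2
  have hβ₉ : β₉ = 0 := by linear_combination (hsum' - hdiff') / 2
  subst hα₀ hβ₉
  refine ⟨rfl, ?_, ?_, rfl⟩
  · simpa [hτ0] using e₃
  · simpa [hτ0] using e₂

lemma eq_zero_of_degree_eq_nine {φ : Vd 9 →ₗ[ℂ] Vd 1} (hε : IsPrimitiveRoot ε 5)
    (hτ : τ ^ 2 + τ - 1 = 0) (hc : 25 * τ ^ 4 * c ^ 8 = 1)
    (hS : ∀ f, φ (actV !![ε ^ 3, 0; 0, ε ^ 2] 9 f) = actV !![ε ^ 3, 0; 0, ε ^ 2] 1 (φ f))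
    (hT : ∀ f, φ (actV (c • !![τ, 1; 1, -τ]) 9 f) = actV (c • !![τ, 1; 1, -τ]) 1 (φ f)) :
    φ = 0 := by
  have hX0 : extCoeff φ 0 (X 0 ^ 9) = 0 := by
    simpa using extCoeff_eq_zero_of_weight hε hS (add_zero 9) 0 (by norm_num)
  have hX1 : extCoeff φ 1 (X 1 ^ 9) = 0 := by
    simpa using extCoeff_eq_zero_of_weight hε hS (zero_add 9) 1 (by norm_num)
  have hw0 : {a ∈ Finset.range (9 + 1) | (3 * a + 2 * (9 - a)) % 5 = 3 - ((0 : Fin 2) : ℕ)} =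
      {0, 5} := by decide
  have hw1 : {a ∈ Finset.range (9 + 1) | (3 * a + 2 * (9 - a)) % 5 = 3 - ((1 : Fin 2) : ℕ)} =
      {4, 9} := by decide
  have e₀₀ := extCoeff_substMap hT (isHomogeneous_X_pow 0 9) 0
  have e₀₁ := extCoeff_substMap hT (isHomogeneous_X_pow 0 9) 1
  have e₁₀ := extCoeff_substMap hT (isHomogeneous_X_pow 1 9) 0
  have e₁₁ := extCoeff_substMap hT (isHomogeneous_X_pow 1 9) 1
  simp only [substMap_X_pow, LinearMap.map_linearForm_pow,
    sum_extCoeff_eq_sum_filter_weight hε hS, hw0, hw1, Finset.sum_pair (by norm_num : (0 : ℕ) ≠ 5),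
    Finset.sum_pair (by norm_num : (4 : ℕ) ≠ 9)] at e₀₀ e₀₁ e₁₀ e₁₁
  norm_num [Fin.sum_univ_two, hX0, hX1, Nat.choose] at e₀₀ e₀₁ e₁₀ e₁₁
  obtain ⟨h₀, h₅, h₄, h₉⟩ := eq_zero_of_degree_nine_relations hτ hc (α₀ := extCoeff φ 0 (X 1 ^ 9))
    (α₅ := extCoeff φ 0 (X 0 ^ 5 * X 1 ^ 4)) (β₄ := extCoeff φ 1 (X 0 ^ 4 * X 1 ^ 5))
    (β₉ := extCoeff φ 1 (X 0 ^ 9)) (by linear_combination e₀₀) (by linear_combination e₀₁)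
    (by linear_combination e₁₀) (by linear_combination e₁₁)
  refine eq_zero_of_extCoeff_X_pow_mul_X_pow fun j a b hab => ?_
  by_cases hw : (3 * a + 2 * b) % 5 ≠ 3 - j
  · exact extCoeff_eq_zero_of_weight hε hS hab j hw
  obtain rfl : b = 9 - a := by omega
  have ha : a ≤ 9 := by omega
  fin_cases j <;> interval_cases a <;> simp_all

end Icosahedral

section FifthRoots

variable {ε : ℂ}

lemma sq_add_sub_one_eq_zero_of_isPrimitiveRoot_five (hε : IsPrimitiveRoot ε 5) :
    (ε + ε ^ 4) ^ 2 + (ε + ε ^ 4) - 1 = 0 := by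
  have hΦ := hε.geom_sum_eq_zero (by norm_num)
  simp only [Finset.sum_range_succ, Finset.sum_range_zero] at hΦ
  linear_combination hΦ + (2 + ε ^ 3) * hε.pow_eq_one

lemma sub_pow_eight_of_isPrimitiveRoot_five (hε : IsPrimitiveRoot ε 5) :
    (ε ^ 2 - ε ^ 3) ^ 8 = 25 * (ε + ε ^ 4) ^ 4 := by
  have hτ := sq_add_sub_one_eq_zero_of_isPrimitiveRoot_five hε
  have hδ : (ε ^ 2 - ε ^ 3) ^ 2 = ε + ε ^ 4 - 2 := by linear_combination (ε - 2) * hε.pow_eq_one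
  have hτ' : (ε + ε ^ 4 - 2) ^ 2 = 5 * (ε + ε ^ 4) ^ 2 := by linear_combination -4 * hτ
  calc (ε ^ 2 - ε ^ 3) ^ 8 = (((ε ^ 2 - ε ^ 3) ^ 2) ^ 2) ^ 2 := by ring
    _ = 25 * (ε + ε ^ 4) ^ 4 := by rw [hδ, hτ']; ring

end FifthRoots

theorem stmt1_general (ε : ℂ) (hε : IsPrimitiveRoot ε 5)
    (S T U : GL (Fin 2) ℂ)
    (hS : (S : Matrix (Fin 2) (Fin 2) ℂ) = !![ε ^ 3, 0; 0, ε ^ 2])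
    (hT : (T : Matrix (Fin 2) (Fin 2) ℂ) =
      (ε ^ 2 - ε ^ 3)⁻¹ • !![ε + ε ^ 4, 1; 1, -(ε + ε ^ 4)])
    (Gicosa : Subgroup (GL (Fin 2) ℂ)) (hG : Gicosa = Subgroup.closure {S, T, U})
    (k : ℕ) (hk2 : 2 ≤ k) (hk5 : k ≤ 5)
    (φ : Vd (2 * k - 1) →ₗ[ℂ] Vd 1)
    (hequiv : ∀ g ∈ Gicosa, ∀ f : Vd (2 * k - 1),
      φ (actV (↑g) (2 * k - 1) f) = actV (↑g) 1 (φ f)) :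
    φ = 0 := by
  have hτ := sq_add_sub_one_eq_zero_of_isPrimitiveRoot_five hε
  have hτ0 : ε + ε ^ 4 ≠ 0 := fun h => by simp [h] at hτ
  have hδ0 : ε ^ 2 - ε ^ 3 ≠ 0 := fun h => by
    simpa [h, hτ0] using sub_pow_eight_of_isPrimitiveRoot_five hε
  have hc : 25 * (ε + ε ^ 4) ^ 4 * ((ε ^ 2 - ε ^ 3)⁻¹) ^ 8 = 1 := by
    rw [← sub_pow_eight_of_isPrimitiveRoot_five hε, inv_pow, mul_inv_cancel₀ (pow_ne_zero 8 hδ0)]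
  have hφS := hS ▸ hequiv S (hG ▸ Subgroup.subset_closure (by simp))
  have hφT := hT ▸ hequiv T (hG ▸ Subgroup.subset_closure (by simp))
  interval_cases k
  all_goals first
    | exact eq_zero_of_degree_eq_nine hε hτ hc hφS hφT
    | exact eq_zero_of_degree_eq_three_five_seven hε (inv_ne_zero hδ0) hτ0 (by norm_num) hφS hφT

theorem stmt1 (ε : ℂ) (hε : IsPrimitiveRoot ε 5)
    (S T U : GL (Fin 2) ℂ)
    (hS : (S : Matrix (Fin 2) (Fin 2) ℂ) = !![ε ^ 3, 0; 0, ε ^ 2])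
    (hT : (T : Matrix (Fin 2) (Fin 2) ℂ) =
      (ε ^ 2 - ε ^ 3)⁻¹ • !![ε + ε ^ 4, 1; 1, -(ε + ε ^ 4)])
    (hU : (U : Matrix (Fin 2) (Fin 2) ℂ) = !![0, 1; -1, 0])
    (Gicosa : Subgroup (GL (Fin 2) ℂ)) (hG : Gicosa = Subgroup.closure {S, T, U})
    (k : ℕ) (hk2 : 2 ≤ k) (hk5 : k ≤ 5)
    (φ : Vd (2 * k - 1) →ₗ[ℂ] Vd 1)
    (hequiv : ∀ g ∈ Gicosa, ∀ f : Vd (2 * k - 1),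
      φ (actV (↑g) (2 * k - 1) f) = actV (↑g) 1 (φ f)) :
    φ = 0 :=
  stmt1_general ε hε S T U hS hT Gicosa hG k hk2 hk5 φ hequiv
end
end

section
/- Let ε ∈ ℂ be a primitive 5th root of unity and let G_icosa be the binary icosahedral group, i.e., the subgroup of GL(2,ℂ) generated by the matrices S = [[ε³, 0], [0, ε²]], T = (1/(ε² − ε³))·[[ε + ε⁴, 1], [1, −(ε + ε⁴)]], and U = [[0, 1], [−1, 0]]. For every degree d with 1 ≤ d ≤ 11, the only homogeneous polynomial f ∈ ℂ[x₁,x₂] of degree d satisfying f(Ax) = f(x) for all A ∈ G_icosa is the zero polynomial; that is, the space of G_icosa-invariant homogeneous polynomials of degree d is zero for 1 ≤ d ≤ 11, while for d = 0 it is one-dimensional. -/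
/-!
The diagonal generator `S` forces every monomial `x^a y^b` of an invariant form to satisfy
`5 ∣ 3a + 2b`, and `U`, which sends `x^a y^b` to `(-1)^b x^b y^a`, rules out odd degrees and the
monomials `(xy)^k` with `k` odd. In degrees `1, …, 11` this leaves only multiples of `(xy)^2`,
`(xy)^4` and `x^10 + y^10`, and none of these is fixed by `T`: compare the values at `(1, 0)` and
at `T (1, 0)`. In degree `0` the invariants are the constants.
-/

open Matrix MvPolynomial

noncomputable section

/-- The space of `G`-invariant homogeneous polynomials of degree `d`. -/
def invariants (G : Subgroup (GL (Fin 2) ℂ)) (d : ℕ) :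
    Submodule ℂ (MvPolynomial (Fin 2) ℂ) where
  carrier := {f | f ∈ Vd d ∧ ∀ g ∈ G, substMap (↑g) f = f}
  add_mem' := fun ha hb => ⟨(Vd _).add_mem ha.1 hb.1,
    fun g hg => by rw [map_add, ha.2 g hg, hb.2 g hg]⟩
  zero_mem' := ⟨(Vd _).zero_mem, fun g _ => map_zero _⟩
  smul_mem' := fun c f hf => ⟨(Vd _).smul_mem c hf.1,
    fun g hg => by rw [_root_.map_smul, hf.2 g hg]⟩

lemma eval_substMap (A : Matrix (Fin 2) (Fin 2) ℂ) (p : Fin 2 → ℂ) (f : MvPolynomial (Fin 2) ℂ) :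
    eval p (substMap A f) = eval (A *ᵥ p) f := by
  rw [← coe_aeval_eq_eval, ← coe_aeval_eq_eval]
  refine (aeval_bind₁ p _ f).trans (congrArg (aeval · f) (funext fun i => ?_))
  simp only [map_sum, map_smul, aeval_X, mulVec, dotProduct, smul_eq_mul]

lemma eval_mulVec_eq_of_substMap_eq {A : Matrix (Fin 2) (Fin 2) ℂ} {f : MvPolynomial (Fin 2) ℂ}
    (hA : substMap A f = f) (p : Fin 2 → ℂ) : eval (A *ᵥ p) f = eval p f := by
  rw [← eval_substMap, hA]

lemma coeff_apply_of_map_monomial {σ R : Type*} [CommSemiring R]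
    {L : MvPolynomial σ R →ₗ[R] MvPolynomial σ R} {e : (σ →₀ ℕ) → σ →₀ ℕ}
    (he : e.Injective) (w : (σ →₀ ℕ) → R) (hL : ∀ m c, L (monomial m c) = monomial (e m) (w m * c))
    (f : MvPolynomial σ R) (m : σ →₀ ℕ) : coeff (e m) (L f) = w m * coeff m f := by
  induction f using MvPolynomial.induction_on' with
  | monomial n c =>
    classical
    simp only [hL, coeff_monomial, he.eq_iff]
    split_ifs with h
    · rw [h]
    · rw [mul_zero]
  | add p q hp hq => rw [map_add, coeff_add, coeff_add, hp, hq, mul_add]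

lemma equivMapDomain_swap_involutive {α M : Type*} [DecidableEq α] [Zero M] (a b : α) :
    Function.Involutive (Finsupp.equivMapDomain (M := M) (Equiv.swap a b)) := fun m => by
  ext i
  simp

lemma substMap_diagonal_monomial (α β : ℂ) (m : Fin 2 →₀ ℕ) (c : ℂ) :
    substMap !![α, 0; 0, β] (monomial m c) = monomial m (α ^ m 0 * β ^ m 1 * c) := by
  simp [substMap, monomial_eq, Finsupp.prod_pow, Fin.prod_univ_two, smul_eq_C_mul]
  ring

lemma substMap_antidiagonal_monomial (α β : ℂ) (m : Fin 2 →₀ ℕ) (c : ℂ) :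
    substMap !![0, α; β, 0] (monomial m c) =
      monomial (m.equivMapDomain (Equiv.swap 0 1)) (α ^ m 0 * β ^ m 1 * c) := by
  simp [substMap, monomial_eq, Finsupp.prod_pow, Fin.prod_univ_two, smul_eq_C_mul]
  ring

lemma coeff_substMap_diagonal (α β : ℂ) (f : MvPolynomial (Fin 2) ℂ) (m : Fin 2 →₀ ℕ) :
    coeff m (substMap !![α, 0; 0, β] f) = α ^ m 0 * β ^ m 1 * coeff m f :=
  coeff_apply_of_map_monomial (e := id) Function.injective_id _ (substMap_diagonal_monomial α β) f m

lemma coeff_substMap_antidiagonal (α β : ℂ) (f : MvPolynomial (Fin 2) ℂ) (m : Fin 2 →₀ ℕ) :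
    coeff (m.equivMapDomain (Equiv.swap 0 1)) (substMap !![0, α; β, 0] f) =
      α ^ m 0 * β ^ m 1 * coeff m f :=
  coeff_apply_of_map_monomial (equivMapDomain_swap_involutive 0 1).injective _
    (substMap_antidiagonal_monomial α β) f m

lemma dvd_of_coeff_ne_zero_of_substMap_diagonal_eq {n a b : ℕ} {ζ : ℂ} (hζ : IsPrimitiveRoot ζ n)
    {f : MvPolynomial (Fin 2) ℂ} (hf : substMap !![ζ ^ a, 0; 0, ζ ^ b] f = f)
    {m : Fin 2 →₀ ℕ} (hm : coeff m f ≠ 0) : n ∣ a * m 0 + b * m 1 := by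
  have h := coeff_substMap_diagonal (ζ ^ a) (ζ ^ b) f m
  rw [hf, ← pow_mul, ← pow_mul, ← pow_add] at h
  exact (hζ.pow_eq_one_iff_dvd _).1 (mul_right_cancel₀ hm (by rw [one_mul, ← h]))

lemma eq_zero_of_eq_neg_one_pow_mul {c : ℂ} {n : ℕ} (hn : Odd n) (h : c = (-1) ^ n * c) :
    c = 0 := by
  rw [hn.neg_one_pow, neg_one_mul] at h
  exact self_eq_neg.1 h

section Rotation

variable {f : MvPolynomial (Fin 2) ℂ} (hf : substMap !![0, 1; -1, 0] f = f)
include hf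

lemma coeff_swap_of_substMap_rotation_eq (m : Fin 2 →₀ ℕ) :
    coeff (m.equivMapDomain (Equiv.swap 0 1)) f = (-1) ^ m 1 * coeff m f := by
  simpa [hf] using coeff_substMap_antidiagonal 1 (-1) f m

lemma even_add_of_substMap_rotation_eq {m : Fin 2 →₀ ℕ} (hm : coeff m f ≠ 0) : Even (m 0 + m 1) := by
  have h := coeff_swap_of_substMap_rotation_eq hf (m.equivMapDomain (Equiv.swap 0 1))
  rw [coeff_swap_of_substMap_rotation_eq hf m] at h
  simp only [equivMapDomain_swap_involutive 0 1 m, Finsupp.equivMapDomain_apply, Equiv.symm_swap,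
    Equiv.swap_apply_right, ← mul_assoc, ← pow_add] at h
  by_contra hodd
  exact hm (eq_zero_of_eq_neg_one_pow_mul (Nat.not_even_iff_odd.1 hodd) h)

lemma even_of_substMap_rotation_eq_of_eq {m : Fin 2 →₀ ℕ} (hm : coeff m f ≠ 0) (hm01 : m 0 = m 1) :
    Even (m 0) := by
  have hswap : m.equivMapDomain (Equiv.swap 0 1) = m := by
    ext i; fin_cases i <;> simp [hm01]
  have h := coeff_swap_of_substMap_rotation_eq hf m
  rw [hswap, ← hm01] at h
  by_contra hodd
  exact hm (eq_zero_of_eq_neg_one_pow_mul (Nat.not_even_iff_odd.1 hodd) h)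

end Rotation

lemma exponents_of_degree_le_eleven {a b : ℕ} (h1 : 1 ≤ a + b) (h11 : a + b ≤ 11)
    (h5 : 5 ∣ 3 * a + 2 * b) (heven : Even (a + b)) (hdiag : a = b → Even a) :
    a = 2 ∧ b = 2 ∨ a = 4 ∧ b = 4 ∨ a = 10 ∧ b = 0 ∨ a = 0 ∧ b = 10 := by
  simp only [Nat.even_iff] at heven hdiag
  by_cases hab : a = b
  · have := hdiag hab
    omega
  · omega

section Evaluation

variable {R : Type*} [CommSemiring R] {f : MvPolynomial (Fin 2) R}

lemma eval_eq_of_forall_mem_support_eq {k : ℕ} (h : ∀ m ∈ f.support, m 0 = k ∧ m 1 = k)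
    (p : Fin 2 → R) : eval p f = eval 1 f * (p 0 * p 1) ^ k := by
  rw [eval_eq', eval_eq', Finset.sum_mul]
  refine Finset.sum_congr rfl fun m hm => ?_
  simp [Fin.prod_univ_two, (h m hm).1, (h m hm).2, mul_pow]

lemma eval_eq_of_forall_mem_support_pure_pow {n : ℕ} (hn : n ≠ 0)
    (h : ∀ m ∈ f.support, m 0 = n ∧ m 1 = 0 ∨ m 0 = 0 ∧ m 1 = n) (p : Fin 2 → R) :
    eval p f = eval ![1, 0] f * p 0 ^ n + eval ![0, 1] f * p 1 ^ n := by
  rw [eval_eq', eval_eq', eval_eq', Finset.sum_mul, Finset.sum_mul, ← Finset.sum_add_distrib]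
  refine Finset.sum_congr rfl fun m hm => ?_
  rcases h m hm with ⟨h0, h1⟩ | ⟨h0, h1⟩ <;> simp [Fin.prod_univ_two, h0, h1, hn]

end Evaluation

section Field

variable {K : Type*} [Field K] [Infinite K] {f : MvPolynomial (Fin 2) K} {x y : K}

lemma eq_zero_of_forall_mem_support_eq {k : ℕ} (hk : k ≠ 0)
    (h : ∀ m ∈ f.support, m 0 = k ∧ m 1 = k) (hxy : x * y ≠ 0)
    (hfix : eval ![x, y] f = eval ![1, 0] f) : f = 0 := by
  simp only [eval_eq_of_forall_mem_support_eq h ![x, y],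
    eval_eq_of_forall_mem_support_eq h ![1, 0]] at hfix
  have h1 : eval 1 f = 0 := by simpa [hk, hxy] using hfix
  exact MvPolynomial.funext fun p => by simp [eval_eq_of_forall_mem_support_eq h p, h1]

lemma eq_zero_of_forall_mem_support_pure_pow {n : ℕ} (hn : n ≠ 0)
    (h : ∀ m ∈ f.support, m 0 = n ∧ m 1 = 0 ∨ m 0 = 0 ∧ m 1 = n)
    (hsym : eval ![0, 1] f = eval ![1, 0] f) (hxy : x ^ n + y ^ n ≠ 1)
    (hfix : eval ![x, y] f = eval ![1, 0] f) : f = 0 := by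
  have key := eval_eq_of_forall_mem_support_pure_pow hn h
  rw [key, hsym] at hfix
  simp only [Matrix.cons_val_zero, Matrix.cons_val_one] at hfix
  have h1 : eval ![1, 0] f = 0 := by
    refine (mul_eq_zero.1 ?_).resolve_right (sub_ne_zero.2 hxy)
    linear_combination hfix
  exact MvPolynomial.funext fun p => by simp [key p, hsym, h1]

end Field

section PrimitiveFifthRoot

variable {ε : ℂ} (hε : IsPrimitiveRoot ε 5)
include hε

lemma IsPrimitiveRoot.five_sq_add_self : (ε + ε ^ 4) ^ 2 + (ε + ε ^ 4) = 1 := by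
  have hsum := hε.geom_sum_eq_zero (by norm_num)
  simp only [Finset.sum_range_succ, Finset.sum_range_zero] at hsum
  linear_combination (ε ^ 3 + 2) * hε.pow_eq_one + hsum

lemma IsPrimitiveRoot.five_sub_sq : (ε ^ 2 - ε ^ 3) ^ 2 = (ε + ε ^ 4) - 2 := by
  linear_combination (ε - 2) * hε.pow_eq_one

end PrimitiveFifthRoot

-- Modulo `μ ^ 2 + μ - 1`, `μ ^ 10 + 1 - (μ - 2) ^ 5` reduces to `210 - 330 μ`, forcing `μ = 7 / 11`.
lemma pow_ten_ne_pow_ten_add_one {μ z : ℂ} (hμ : μ ^ 2 + μ = 1) (hz : z ^ 2 = μ - 2) :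
    z ^ 10 ≠ μ ^ 10 + 1 := by
  grind

lemma exponents_of_substMap_eq {ε : ℂ} (hε : IsPrimitiveRoot ε 5) {d : ℕ} (hd1 : 1 ≤ d)
    (hd11 : d ≤ 11) {f : MvPolynomial (Fin 2) ℂ} (hf : f.IsHomogeneous d)
    (hS : substMap !![ε ^ 3, 0; 0, ε ^ 2] f = f) (hU : substMap !![0, 1; -1, 0] f = f)
    {m : Fin 2 →₀ ℕ} (hm : coeff m f ≠ 0) :
    m 0 + m 1 = d ∧
      (m 0 = 2 ∧ m 1 = 2 ∨ m 0 = 4 ∧ m 1 = 4 ∨ m 0 = 10 ∧ m 1 = 0 ∨ m 0 = 0 ∧ m 1 = 10) := by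
  have hdeg : m 0 + m 1 = d := by
    simpa [Finsupp.weight_apply, Finsupp.sum_fintype, Fin.sum_univ_two] using hf hm
  exact ⟨hdeg, exponents_of_degree_le_eleven (by omega) (by omega)
    (dvd_of_coeff_ne_zero_of_substMap_diagonal_eq hε hS hm)
    (even_add_of_substMap_rotation_eq hU hm) (even_of_substMap_rotation_eq_of_eq hU hm)⟩

lemma eq_zero_of_isHomogeneous_of_substMap_eq {ε : ℂ} (hε : IsPrimitiveRoot ε 5) {d : ℕ}
    (hd1 : 1 ≤ d) (hd11 : d ≤ 11) {f : MvPolynomial (Fin 2) ℂ} (hf : f.IsHomogeneous d)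
    (hS : substMap !![ε ^ 3, 0; 0, ε ^ 2] f = f)
    (hT : substMap ((ε ^ 2 - ε ^ 3)⁻¹ • !![ε + ε ^ 4, 1; 1, -(ε + ε ^ 4)]) f = f)
    (hU : substMap !![0, 1; -1, 0] f = f) : f = 0 := by
  have hexp := fun m (hm : m ∈ f.support) =>
    exponents_of_substMap_eq hε hd1 hd11 hf hS hU (mem_support_iff.1 hm)
  set μ := ε + ε ^ 4
  set z := ε ^ 2 - ε ^ 3
  have hμ : μ ^ 2 + μ = 1 := hε.five_sq_add_self
  have hz : z ^ 2 = μ - 2 := hε.five_sub_sq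
  have hμ0 : μ ≠ 0 := by rintro h; simp [h] at hμ
  have hz0 : z ≠ 0 := by rintro h; rw [h] at hz; grind
  have hTv : (z⁻¹ • !![μ, 1; 1, -μ]) *ᵥ ![1, 0] = ![z⁻¹ * μ, z⁻¹] := by
    ext i; fin_cases i <;> simp [mulVec, dotProduct]
  have hUv : !![0, 1; -1, 0] *ᵥ ![0, 1] = ![(1 : ℂ), 0] := by
    ext i; fin_cases i <;> simp [mulVec, dotProduct]
  have hTe := hTv ▸ eval_mulVec_eq_of_substMap_eq hT ![1, 0]
  have hUe := hUv ▸ eval_mulVec_eq_of_substMap_eq hU ![0, 1]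
  by_contra hne
  obtain ⟨m, hm⟩ := MvPolynomial.ne_zero_iff.1 hne
  obtain ⟨rfl, hm0 | hm0 | hm0⟩ := hexp m (mem_support_iff.2 hm)
  · exact hne (eq_zero_of_forall_mem_support_eq two_ne_zero
      (fun m' hm' => by have := hexp m' hm'; omega) (by simp [hμ0, hz0]) hTe)
  · exact hne (eq_zero_of_forall_mem_support_eq four_ne_zero
      (fun m' hm' => by have := hexp m' hm'; omega) (by simp [hμ0, hz0]) hTe)
  · refine hne (eq_zero_of_forall_mem_support_pure_pow (n := 10) (by norm_num)
      (fun m' hm' => by have := hexp m' hm'; omega) hUe.symm ?_ hTe)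
    intro h
    apply pow_ten_ne_pow_ten_add_one hμ hz
    field_simp at h
    exact h.symm

lemma invariants_zero_eq_span_one (G : Subgroup (GL (Fin 2) ℂ)) :
    invariants G 0 = Submodule.span ℂ {1} := by
  ext f
  rw [Submodule.mem_span_singleton]
  constructor
  · rintro ⟨hf, -⟩
    refine ⟨coeff 0 f, ?_⟩
    rw [smul_eq_C_mul, mul_one, ← homogeneousComponent_zero, homogeneousComponent_of_mem hf,
      if_pos rfl]
  · rintro ⟨a, rfl⟩
    exact ⟨(Vd 0).smul_mem a (isHomogeneous_one _ _), fun g _ => by simp [substMap]⟩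

lemma finrank_invariants_zero (G : Subgroup (GL (Fin 2) ℂ)) :
    Module.finrank ℂ (invariants G 0) = 1 := by
  rw [invariants_zero_eq_span_one]
  exact finrank_span_singleton one_ne_zero

theorem stmt3 (ε : ℂ) (hε : IsPrimitiveRoot ε 5)
    (S T U : GL (Fin 2) ℂ)
    (hS : (S : Matrix (Fin 2) (Fin 2) ℂ) = !![ε ^ 3, 0; 0, ε ^ 2])
    (hT : (T : Matrix (Fin 2) (Fin 2) ℂ) =
      (ε ^ 2 - ε ^ 3)⁻¹ • !![ε + ε ^ 4, 1; 1, -(ε + ε ^ 4)])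
    (hU : (U : Matrix (Fin 2) (Fin 2) ℂ) = !![0, 1; -1, 0])
    (Gicosa : Subgroup (GL (Fin 2) ℂ)) (hG : Gicosa = Subgroup.closure {S, T, U}) :
    (∀ d : ℕ, 1 ≤ d → d ≤ 11 →
      ∀ f : MvPolynomial (Fin 2) ℂ, f ∈ homogeneousSubmodule (Fin 2) ℂ d →
        (∀ g ∈ Gicosa, substMap (↑g) f = f) → f = 0) ∧
    Module.finrank ℂ (invariants Gicosa 0) = 1 := by
  refine ⟨fun d hd1 hd11 f hf hfix => ?_, finrank_invariants_zero Gicosa⟩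
  have hgen : ∀ g ∈ ({S, T, U} : Set (GL (Fin 2) ℂ)), substMap (↑g) f = f :=
    fun g hg => hfix g (hG ▸ Subgroup.subset_closure hg)
  refine eq_zero_of_isHomogeneous_of_substMap_eq hε hd1 hd11
    ((mem_homogeneousSubmodule _ _).1 hf) ?_ ?_ ?_
  · exact hS ▸ hgen S (by simp)
  · exact hT ▸ hgen T (by simp)
  · exact hU ▸ hgen U (by simp)
end
end
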